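/- The Delannoy numbers defined by D(m,0) = D(0,n) = 1 and D(m,n) = D(m−1,n) + D(m,n−1) + D(m−1,n−1) for m,n ≥ 1 satisfy the closed form D(m,n) = ∑_{υ=0}^{min(m,n)} C(m,υ)·C(n,υ)·2^υ. -/
import Mathlib

lemma delannoy_sum_ext (m n N : ℕ) (h : min m n ≤ N) :
    ∑ υ ∈ Finset.range (min m n + 1), Nat.choose m υ * Nat.choose n υ * 2 ^ υ
      = ∑ υ ∈ Finset.range (N + 1), Nat.choose m υ * Nat.choose n υ * 2 ^ υ := by
  apply Finset.sum_subset (Finset.range_subset_range.mpr (by omega))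
  intro x hx hx'
  simp only [Finset.mem_range] at hx hx'
  have : m < x ∨ n < x := by omega
  rcases this with h | h
  · simp [Nat.choose_eq_zero_of_lt h]
  · simp [Nat.choose_eq_zero_of_lt h]

lemma delannoy_key (m n N : ℕ) (hN : m < N) :
    ∑ υ ∈ Finset.range (N + 1), Nat.choose (m+1) υ * Nat.choose (n+1) υ * 2 ^ υ
      = ∑ υ ∈ Finset.range (N + 1), Nat.choose m υ * Nat.choose (n+1) υ * 2 ^ υ
      + ∑ υ ∈ Finset.range (N + 1), Nat.choose (m+1) υ * Nat.choose n υ * 2 ^ υ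
      + ∑ υ ∈ Finset.range (N + 1), Nat.choose m υ * Nat.choose n υ * 2 ^ υ := by
  -- abbreviations
  set X := ∑ υ ∈ Finset.range N, Nat.choose m υ * Nat.choose n (υ+1) * 2 ^ (υ+1) with hX
  set Y := ∑ υ ∈ Finset.range N, Nat.choose m (υ+1) * Nat.choose n υ * 2 ^ (υ+1) with hY
  set Z := ∑ υ ∈ Finset.range N, Nat.choose m (υ+1) * Nat.choose n (υ+1) * 2 ^ (υ+1) with hZ
  set S := ∑ υ ∈ Finset.range N, Nat.choose m υ * Nat.choose n υ * 2 ^ υ with hS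
  have hSfull : ∑ υ ∈ Finset.range (N+1), Nat.choose m υ * Nat.choose n υ * 2 ^ υ = S := by
    rw [Finset.sum_range_succ, Nat.choose_eq_zero_of_lt hN]
    simp [hS]
  have hZS : Z = S - 1 ∧ 1 ≤ S := by
    constructor
    · have : 1 + Z = S := by
        rw [← hSfull, Finset.sum_range_succ']
        simp [hZ, Nat.add_comm]
      omega
    · rw [hS]
      cases N with
      | zero => omega
      | succ k =>
        calc 1 = Nat.choose m 0 * Nat.choose n 0 * 2 ^ 0 := by simp
        _ ≤ _ := Finset.single_le_sum (f := fun υ => Nat.choose m υ * Nat.choose n υ * 2 ^ υ)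
              (fun _ _ => Nat.zero_le _) (by simp)
  obtain ⟨hZeq, hS1⟩ := hZS
  have hL : ∑ υ ∈ Finset.range (N + 1), Nat.choose (m+1) υ * Nat.choose (n+1) υ * 2 ^ υ
      = 1 + (2 * S + X + Y + Z) := by
    rw [Finset.sum_range_succ']
    simp only [Nat.choose_succ_succ]
    have : ∑ υ ∈ Finset.range N,
        (Nat.choose m υ + Nat.choose m (υ+1)) * (Nat.choose n υ + Nat.choose n (υ+1)) * 2 ^ (υ+1)
        = 2 * S + X + Y + Z := by
      rw [hS, hX, hY, hZ, Finset.mul_sum, ← Finset.sum_add_distrib, ← Finset.sum_add_distrib,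
        ← Finset.sum_add_distrib]
      apply Finset.sum_congr rfl
      intro x _
      ring
    rw [this]
    simp [Nat.add_comm]
  have hR1 : ∑ υ ∈ Finset.range (N + 1), Nat.choose m υ * Nat.choose (n+1) υ * 2 ^ υ
      = 1 + (Y + Z) := by
    rw [Finset.sum_range_succ']
    simp only [Nat.choose_succ_succ]
    have : ∑ υ ∈ Finset.range N,
        Nat.choose m (υ+1) * (Nat.choose n υ + Nat.choose n (υ+1)) * 2 ^ (υ+1) = Y + Z := by
      rw [hY, hZ, ← Finset.sum_add_distrib]
      apply Finset.sum_congr rfl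
      intro x _
      ring
    rw [this]
    simp [Nat.add_comm]
  have hR2 : ∑ υ ∈ Finset.range (N + 1), Nat.choose (m+1) υ * Nat.choose n υ * 2 ^ υ
      = 1 + (X + Z) := by
    rw [Finset.sum_range_succ']
    simp only [Nat.choose_succ_succ]
    have : ∑ υ ∈ Finset.range N,
        (Nat.choose m υ + Nat.choose m (υ+1)) * Nat.choose n (υ+1) * 2 ^ (υ+1) = X + Z := by
      rw [hX, hZ, ← Finset.sum_add_distrib]
      apply Finset.sum_congr rfl
      intro x _
      ring
    rw [this]
    simp [Nat.add_comm]
  rw [hL, hR1, hR2, hSfull]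
  omega

/-- The Delannoy numbers, defined by D(m,0) = D(0,n) = 1 and the three-term
recurrence, satisfy the closed form D(m,n) = ∑_{υ=0}^{min(m,n)} C(m,υ)·C(n,υ)·2^υ. -/
theorem delannoy_closed_form (D : ℕ → ℕ → ℕ)
    (h0left : ∀ m, D m 0 = 1) (h0right : ∀ n, D 0 n = 1)
    (hrec : ∀ m n, 1 ≤ m → 1 ≤ n →
      D m n = D (m - 1) n + D m (n - 1) + D (m - 1) (n - 1)) :
    ∀ m n, D m n =
      ∑ υ ∈ Finset.range (min m n + 1), Nat.choose m υ * Nat.choose n υ * 2 ^ υ := by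
  intro m
  induction m with
  | zero => intro n; simp [h0right]
  | succ m ih =>
    intro n
    induction n with
    | zero => simp [h0left]
    | succ n ihn =>
      rw [hrec (m+1) (n+1) (by omega) (by omega)]
      simp only [Nat.add_sub_cancel]
      rw [ih (n+1), ih n, ihn]
      set N := m + n + 1 with hNdef
      rw [delannoy_sum_ext (m+1) (n+1) N (by omega),
          delannoy_sum_ext m (n+1) N (by omega),
          delannoy_sum_ext (m+1) n N (by omega),
          delannoy_sum_ext m n N (by omega),
          delannoy_key m n N (by omega)]
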